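/- Let m ∈ ℕ. Then for all x ∈ ℝ, the m-th derivative of the hyperbolic tangent satisfies |tanh^{(m)}(x)| ≤ (2m)^{m+1} · min{exp(−2x), exp(2x)}. -/

import Mathlib

/-!
Differentiating `tanh' = 1 - tanh²` repeatedly gives `tanh^{(m)} = P_m(tanh)` for polynomials
with `P_{m+1} = (1 - X²) P_m'`. The ℓ¹-norm of the coefficients bounds a polynomial on `[-1, 1]`,
and since `deg P_m ≤ m + 1` it grows by at most a factor `2(m + 1)` per step, so `‖P_m‖₁ ≤ 2^m m!`.
For `m ≥ 1` the factor `1 - tanh² = cosh⁻²` can be pulled out of `P_m`, and it supplies the decay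
`cosh⁻² x ≤ 4 e^{-2|x|}`.
-/

open Finset Polynomial Real

namespace Polynomial

variable {R : Type*} [SeminormedRing R]

noncomputable def l1Norm (p : R[X]) : ℝ := p.sum fun _ a => ‖a‖

theorem l1Norm_eq_sum_range {p : R[X]} {n : ℕ} (hn : p.natDegree < n) :
    p.l1Norm = ∑ i ∈ range n, ‖p.coeff i‖ :=
  sum_over_range' p (fun _ => norm_zero) n hn

theorem l1Norm_sub_le (p q : R[X]) : (p - q).l1Norm ≤ p.l1Norm + q.l1Norm := by
  set n := max p.natDegree q.natDegree + 1
  rw [l1Norm_eq_sum_range (n := n) ((natDegree_sub_le p q).trans_lt (lt_add_one _)),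
    l1Norm_eq_sum_range (n := n) (by omega), l1Norm_eq_sum_range (n := n) (by omega),
    ← sum_add_distrib]
  gcongr with i
  simpa only [coeff_sub] using norm_sub_le _ _

theorem l1Norm_X_pow_mul (p : R[X]) (n : ℕ) : (X ^ n * p).l1Norm = p.l1Norm := by
  have hdeg : (X ^ n * p).natDegree < n + (p.natDegree + 1) :=
    natDegree_mul_le.trans_lt (by have := natDegree_X_pow_le (R := R) n; omega)
  rw [l1Norm_eq_sum_range hdeg, sum_range_add, l1Norm_eq_sum_range (lt_add_one _)]
  simp only [coeff_X_pow_mul', add_comm n]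
  rw [sum_eq_zero fun i hi => by simp [(mem_range.1 hi).not_ge], zero_add]
  simp

theorem l1Norm_derivative_le [NormOneClass R] {p : R[X]} {n : ℕ} (hp : p.natDegree ≤ n) :
    (derivative p).l1Norm ≤ n * p.l1Norm := by
  have hcoeff (i : ℕ) : ‖(derivative p).coeff i‖ ≤ n * ‖p.coeff (i + 1)‖ := by
    by_cases hi : p.coeff (i + 1) = 0
    · simp [coeff_derivative, hi]
    have hin : (i : ℝ) + 1 ≤ n := by exact_mod_cast (le_natDegree_of_ne_zero hi).trans hp
    calc ‖(derivative p).coeff i‖ ≤ ‖p.coeff (i + 1)‖ * ‖((i : R) + 1)‖ := by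
          rw [coeff_derivative]; exact norm_mul_le _ _
      _ ≤ ‖p.coeff (i + 1)‖ * n := by
          gcongr
          exact_mod_cast (Nat.norm_cast_le (α := R) (i + 1)).trans (by simpa using hin)
      _ = n * ‖p.coeff (i + 1)‖ := mul_comm _ _
  have hlt : p.natDegree < n + 1 := Nat.lt_succ_of_le hp
  calc (derivative p).l1Norm = ∑ i ∈ range (n + 1), ‖(derivative p).coeff i‖ :=
        l1Norm_eq_sum_range ((natDegree_derivative_le p).trans_lt (by omega))
    _ ≤ ∑ i ∈ range (n + 1), n * ‖p.coeff (i + 1)‖ := sum_le_sum fun i _ => hcoeff i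
    _ ≤ n * p.l1Norm := by
        rw [← mul_sum, l1Norm_eq_sum_range (Nat.lt_succ_of_lt hlt), sum_range_succ' _ (n + 1)]
        gcongr
        exact le_add_of_nonneg_right (norm_nonneg _)

theorem norm_eval_le_l1Norm [NormOneClass R] (p : R[X]) {t : R} (ht : ‖t‖ ≤ 1) :
    ‖p.eval t‖ ≤ p.l1Norm := by
  rw [eval_eq_sum_range, l1Norm_eq_sum_range (lt_add_one _)]
  refine (norm_sum_le _ _).trans (sum_le_sum fun i _ => ?_)
  calc ‖p.coeff i * t ^ i‖ ≤ ‖p.coeff i‖ * ‖t‖ ^ i :=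
        (norm_mul_le _ _).trans (by gcongr; exact norm_pow_le _ _)
    _ ≤ ‖p.coeff i‖ := mul_le_of_le_one_right (norm_nonneg _) (pow_le_one₀ (norm_nonneg _) ht)

end Polynomial

theorem Real.one_sub_tanh_sq (x : ℝ) : 1 - tanh x ^ 2 = (cosh x ^ 2)⁻¹ := by
  have := cosh_sq_sub_sinh_sq x
  have := cosh_pos x
  rw [tanh_eq_sinh_div_cosh]
  field_simp
  linarith

theorem Real.hasDerivAt_tanh (x : ℝ) : HasDerivAt tanh (1 - tanh x ^ 2) x := by
  have h := (hasDerivAt_sinh x).div (hasDerivAt_cosh x) (cosh_pos x).ne'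
  rw [one_sub_tanh_sq, show tanh = sinh / cosh from funext tanh_eq_sinh_div_cosh]
  refine h.congr_deriv ?_
  rw [← sq, ← sq, cosh_sq_sub_sinh_sq, one_div]

theorem Real.inv_cosh_sq_le (x : ℝ) : (cosh x ^ 2)⁻¹ ≤ 4 * exp (-2 * x) := by
  have hcosh : exp x / 2 ≤ cosh x := by
    rw [cosh_eq]; linarith [exp_pos (-x)]
  calc (cosh x ^ 2)⁻¹ ≤ ((exp x / 2) ^ 2)⁻¹ := by gcongr
    _ = 4 * exp (-2 * x) := by
        rw [div_pow, inv_div, ← exp_nat_mul, div_eq_mul_inv, ← exp_neg]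
        norm_num

theorem Real.one_sub_tanh_sq_le (x : ℝ) :
    1 - tanh x ^ 2 ≤ 4 * min (exp (-2 * x)) (exp (2 * x)) := by
  rw [mul_min_of_nonneg _ _ (by norm_num : (0 : ℝ) ≤ 4), one_sub_tanh_sq]
  refine le_min (inv_cosh_sq_le x) ?_
  simpa [cosh_neg] using inv_cosh_sq_le (-x)

noncomputable def tanhDerivPoly : ℕ → ℝ[X]
  | 0 => X
  | m + 1 => (1 - X ^ 2) * derivative (tanhDerivPoly m)

theorem iteratedDeriv_tanh (m : ℕ) :
    iteratedDeriv m tanh = fun x => (tanhDerivPoly m).eval (tanh x) := by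
  induction m with
  | zero => simp [tanhDerivPoly]
  | succ m ih =>
    funext x
    have h : HasDerivAt (fun y => (tanhDerivPoly m).eval (tanh y))
        ((derivative (tanhDerivPoly m)).eval (tanh x) * (1 - tanh x ^ 2)) x :=
      ((tanhDerivPoly m).hasDerivAt (tanh x)).comp x (hasDerivAt_tanh x)
    rw [iteratedDeriv_succ, ih, h.deriv, tanhDerivPoly, eval_mul]
    simp only [eval_sub, eval_one, eval_pow, eval_X]
    ring

theorem iteratedDeriv_succ_tanh (m : ℕ) (x : ℝ) :
    iteratedDeriv (m + 1) tanh x =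
      (1 - tanh x ^ 2) * (derivative (tanhDerivPoly m)).eval (tanh x) := by
  simp [iteratedDeriv_tanh, tanhDerivPoly]

theorem natDegree_tanhDerivPoly_le (m : ℕ) : (tanhDerivPoly m).natDegree ≤ m + 1 := by
  induction m with
  | zero => simp [tanhDerivPoly]
  | succ m ih =>
    rw [tanhDerivPoly]
    refine natDegree_mul_le.trans ?_
    have h₁ : (1 - X ^ 2 : ℝ[X]).natDegree ≤ 2 := (natDegree_sub_le _ _).trans (by simp)
    have h₂ := natDegree_derivative_le (tanhDerivPoly m)
    omega

theorem l1Norm_tanhDerivPoly_le (m : ℕ) :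
    (tanhDerivPoly m).l1Norm ≤ 2 ^ m * m.factorial := by
  induction m with
  | zero => simp [tanhDerivPoly, l1Norm]
  | succ m ih =>
    set P' := derivative (tanhDerivPoly m)
    have hP' : P'.l1Norm ≤ (m + 1 : ℕ) * (2 ^ m * m.factorial) :=
      (l1Norm_derivative_le (natDegree_tanhDerivPoly_le m)).trans (by gcongr)
    calc (tanhDerivPoly (m + 1)).l1Norm ≤ P'.l1Norm + (X ^ 2 * P').l1Norm := by
          rw [tanhDerivPoly, sub_mul, one_mul]; exact l1Norm_sub_le _ _
      _ = 2 * P'.l1Norm := by rw [l1Norm_X_pow_mul]; ring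
      _ ≤ 2 * ((m + 1 : ℕ) * (2 ^ m * m.factorial)) := by gcongr
      _ = 2 ^ (m + 1) * (m + 1).factorial := by push_cast [Nat.factorial_succ]; ring

theorem two_pow_mul_factorial_le {m : ℕ} (hm : 1 ≤ m) :
    (2 : ℝ) ^ (m + 1) * m.factorial ≤ (2 * m) ^ (m + 1) := by
  rw [mul_pow]
  gcongr
  exact_mod_cast m.factorial_le_pow.trans (Nat.pow_le_pow_right hm m.le_succ)

/-- **Lemma A.4.** For `m ≥ 1` and all `x ∈ ℝ`,
`|tanh^{(m)}(x)| ≤ (2m)^{m+1} · min{exp(-2x), exp(2x)}`. -/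
theorem abs_iteratedDeriv_tanh_le (m : ℕ) (hm : 1 ≤ m) (x : ℝ) :
    |iteratedDeriv m Real.tanh x| ≤
      (2 * (m : ℝ)) ^ (m + 1) * min (Real.exp (-2 * x)) (Real.exp (2 * x)) := by
  obtain ⟨k, rfl⟩ : ∃ k, m = k + 1 := ⟨m - 1, by omega⟩
  set P' := derivative (tanhDerivPoly k)
  have hP' : |P'.eval (tanh x)| ≤ (k + 1 : ℕ) * (2 ^ k * k.factorial) :=
    calc _ ≤ P'.l1Norm := norm_eval_le_l1Norm _ (abs_tanh_lt_one x).le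
      _ ≤ _ := (l1Norm_derivative_le (natDegree_tanhDerivPoly_le k)).trans
          (by gcongr; exact l1Norm_tanhDerivPoly_le k)
  have hsech : 0 ≤ 1 - tanh x ^ 2 := by
    rw [one_sub_tanh_sq]; positivity
  calc |iteratedDeriv (k + 1) tanh x| = (1 - tanh x ^ 2) * |P'.eval (tanh x)| := by
        rw [iteratedDeriv_succ_tanh, abs_mul, abs_of_nonneg hsech]
    _ ≤ 4 * min (exp (-2 * x)) (exp (2 * x)) * ((k + 1 : ℕ) * (2 ^ k * k.factorial)) :=
        mul_le_mul (one_sub_tanh_sq_le x) hP' (abs_nonneg _) (by positivity)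
    _ = 2 ^ (k + 1 + 1) * (k + 1).factorial * min (exp (-2 * x)) (exp (2 * x)) := by
        push_cast [Nat.factorial_succ]; ring
    _ ≤ _ := by gcongr; exact two_pow_mul_factorial_le hm
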